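/- Let φ be a 3-CNF formula with n variables and m clauses in which every variable occurs both unnegated and negated, and let G(φ) be the graph constructed from φ (triangle gadgets X_i, X̄_i, Y_i for each variable; a clause vertex C_j adjacent exactly to the three vertices for the negations of its literals; an extra vertex z adjacent to all 2n literal vertices). Then for every well-connected set M of G(φ) with |M| ≥ 5 and every clause index j, if the clause vertex C_j belongs to M then not all three of its neighbors (the vertices corresponding to the negations of the three literals of c_j) belong to M. -/

import Mathlib

/-- A set `M` of vertices of `G` is *well-connected* if (i) any two distinct
vertices of `M` are joined by a path in `G` avoiding all other vertices of `M`,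
and (ii) the subgraph induced by the complement of `M` is connected
(the empty induced subgraph being regarded as connected). -/
def IsWCS {V : Type*} (G : SimpleGraph V) (M : Set V) : Prop :=
  (∀ u ∈ M, ∀ v ∈ M, u ≠ v →
    ∃ p : G.Walk u v, ∀ w ∈ p.support, w ∈ M → w = u ∨ w = v) ∧
  (G.induce Mᶜ).Preconnected

/-- Vertices of the graph `G(φ)` built from a 3-CNF formula `φ` with `n` variables and
`m` clauses: a literal vertex `lit i b` for each variable `i` and polarity `b`
(`lit i true` is `Xᵢ`, `lit i false` is `X̄ᵢ`), a gadget vertex `gad i = Yᵢ` for each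
variable, a clause vertex `cl j = Cⱼ` for each clause, and one extra vertex `z`. -/
inductive SatVtx (n m : ℕ) where
  | lit : Fin n → Bool → SatVtx n m
  | gad : Fin n → SatVtx n m
  | cl : Fin m → SatVtx n m
  | z : SatVtx n m
deriving DecidableEq

/-- The adjacency-generating relation of `G(φ)`, where the 3-CNF formula is encoded
by `c : Fin m → Fin 3 → Fin n × Bool` giving the three literals of each clause
(`(i, b)` is the literal `xᵢ` if `b = true` and `x̄ᵢ` if `b = false`):
`Xᵢ, X̄ᵢ, Yᵢ` form a triangle; the clause vertex `Cⱼ` is adjacent exactly to the three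
literal vertices corresponding to the negations of its literals; and `z` is adjacent
to all literal vertices. -/
def satRel {n m : ℕ} (c : Fin m → Fin 3 → Fin n × Bool) :
    SatVtx n m → SatVtx n m → Prop
  | .lit i _, .lit i' _ => i = i'
  | .lit i _, .gad i' => i = i'
  | .gad i, .lit i' _ => i = i'
  | .lit i b, .cl j => ∃ k : Fin 3, c j k = (i, !b)
  | .cl j, .lit i b => ∃ k : Fin 3, c j k = (i, !b)
  | .lit _ _, .z => True
  | .z, .lit _ _ => True
  | _, _ => False

/-- The graph `G(φ)` constructed from the 3-CNF formula encoded by `c`. -/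
def satGraph {n m : ℕ} (c : Fin m → Fin 3 → Fin n × Bool) : SimpleGraph (SatVtx n m) :=
  SimpleGraph.fromRel (satRel c)

/-- A path in `G` from `v` to `u` must leave `v` through a neighbour; if all neighbours of `v`
lie in `M`, condition (i) of well-connectedness forces that neighbour to be `u` itself. -/
theorem IsWCS.subset_insert_neighborSet {V : Type*} {G : SimpleGraph V} {M : Set V}
    (hM : IsWCS G M) {v : V} (hv : v ∈ M) (hN : G.neighborSet v ⊆ M) :
    M ⊆ insert v (G.neighborSet v) := by
  intro u hu
  by_cases huv : u = v
  · exact Or.inl huv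
  obtain ⟨p, hp⟩ := hM.1 v hv u hu (Ne.symm huv)
  cases p with
  | nil => exact absurd rfl huv
  | @cons _ w _ hvw q =>
    have hw : w ∈ (SimpleGraph.Walk.cons hvw q).support := by simp
    rcases hp w hw (hN hvw) with rfl | rfl
    · exact (hvw.ne rfl).elim
    · exact Or.inr hvw

theorem satGraph_neighborSet_cl {n m : ℕ} (c : Fin m → Fin 3 → Fin n × Bool) (j : Fin m) :
    (satGraph c).neighborSet (.cl j) = Set.range fun k => .lit (c j k).1 (!(c j k).2) := by
  ext w
  cases w with
  | lit i b =>
    simp only [SimpleGraph.mem_neighborSet, satGraph, SimpleGraph.fromRel_adj, satRel, ne_eq,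
      reduceCtorEq, not_false_eq_true, or_self, true_and, Set.mem_range, SatVtx.lit.injEq]
    constructor
    · rintro ⟨k, hk⟩
      exact ⟨k, by simp [hk]⟩
    · rintro ⟨k, hi, hb⟩
      exact ⟨k, by rw [← hi, ← hb, Bool.not_not]⟩
  | gad i => simp [satGraph, satRel]
  | cl j' => simp [satGraph, satRel]
  | z => simp [satGraph, satRel]

theorem wcs_clause_vertex_general {n m : ℕ} (c : Fin m → Fin 3 → Fin n × Bool)
    (M : Set (SatVtx n m)) (hM : IsWCS (satGraph c) M)
    (hcard : 5 ≤ Nat.card M) (j : Fin m) (hj : SatVtx.cl j ∈ M) :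
    ¬ ∀ k : Fin 3, SatVtx.lit (c j k).1 (!(c j k).2) ∈ M := by
  intro hall
  have hN : (satGraph c).neighborSet (.cl j) ⊆ M := by
    rw [satGraph_neighborSet_cl]
    exact Set.range_subset_iff.2 hall
  have hsub := hM.subset_insert_neighborSet hj hN
  rw [satGraph_neighborSet_cl] at hsub
  have hle : Nat.card M ≤ 4 :=
    calc Nat.card M
        ≤ (insert (SatVtx.cl j) (Set.range fun k => .lit (c j k).1 (!(c j k).2))).ncard := by
          rw [Nat.card_coe_set_eq]
          exact Set.ncard_le_ncard hsub ((Set.finite_range _).insert _)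
      _ ≤ Nat.card (Set.range fun k => SatVtx.lit (c j k).1 (!(c j k).2)) + 1 := by
          rw [Nat.card_coe_set_eq]
          exact Set.ncard_insert_le _ _
      _ ≤ Nat.card (Fin 3) + 1 := by gcongr; exact Finite.card_range_le _
      _ = 4 := by simp
  omega

/-- In the graph `G(φ)` built from a 3-CNF formula `φ` (in which every variable occurs
both unnegated and negated), for every well-connected set `M` with `|M| ≥ 5` and every
clause index `j`: if the clause vertex `Cⱼ` belongs to `M`, then not all three of its
neighbors (the vertices for the negations of the three literals of clause `j`)
belong to `M`. -/
theorem wcs_clause_vertex {n m : ℕ} (c : Fin m → Fin 3 → Fin n × Bool)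
    (hocc : ∀ (i : Fin n) (b : Bool), ∃ (j : Fin m) (k : Fin 3), c j k = (i, b))
    (M : Set (SatVtx n m)) (hM : IsWCS (satGraph c) M)
    (hcard : 5 ≤ Nat.card M) (j : Fin m) (hj : SatVtx.cl j ∈ M) :
    ¬ ∀ k : Fin 3, SatVtx.lit (c j k).1 (!(c j k).2) ∈ M :=
  wcs_clause_vertex_general c M hM hcard j hj
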